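/- arXiv:2311.14056 — 2 statements merged into one kernel-verified Lean document; each statement's English description precedes it below -/
import Mathlib

section
/- Let μ > 0, σ > 0, α > 1, and a < b be real numbers. Define the truncated normal densities p(x) = (1/(μσ√(2π))) · exp(-x²/(2μ²σ²)) / (Φ(b/(μσ)) - Φ(a/(μσ))) and q(x) = (1/(μσ√(2π))) · exp(-(x-μ)²/(2μ²σ²)) / (Φ((b-μ)/(μσ)) - Φ((a-μ)/(μσ))) for x ∈ [a,b]. Then (1/(α-1)) · ln(∫_a^b q(x)^α · p(x)^(1-α) dx) = α/(2σ²) + (1/(α-1)) · ln[ (Φ(b/(μσ)) - Φ(a/(μσ)))^(α-1) / (Φ((b-μ)/(μσ)) - Φ((a-μ)/(μσ)))^α · (Φ((b-αμ)/(μσ)) - Φ((a-αμ)/(μσ))) ]. -/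
open MeasureTheory Real Filter

/-- The standard normal cumulative distribution function
`Φ(x) = (√(2π))⁻¹ ∫_{-∞}^x exp(-t²/2) dt`. -/
noncomputable def stdNormalCDF (x : ℝ) : ℝ :=
  (Real.sqrt (2 * Real.pi))⁻¹ * ∫ t in Set.Iic x, Real.exp (-t ^ 2 / 2)

/-- The standard normal density `φ(x) = (√(2π))⁻¹ exp(-x²/2)`. -/
noncomputable def stdNormalPDF (x : ℝ) : ℝ :=
  (Real.sqrt (2 * Real.pi))⁻¹ * Real.exp (-x ^ 2 / 2)

/-!
Interpolating the two Gaussian exponents with weights `α` and `1 - α` and completing the square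
shows that `q^α p^(1-α)` is the density of `N(αμ, μ²σ²)` on `[a, b]` times the constant
`exp (α(α-1)/(2σ²)) · P^(α-1) / Q^α`, where `P`, `Q` are the normalising masses of `p`, `q`.
Its integral over `[a, b]` is that constant times `Φ((b-αμ)/(μσ)) - Φ((a-αμ)/(μσ))`, and
the logarithm splits off `α(α-1)/(2σ²)`.
-/

lemma integrable_exp_neg_sq_div_two : Integrable fun t : ℝ => exp (-t ^ 2 / 2) := by
  convert integrable_exp_neg_mul_sq (by norm_num : (0 : ℝ) < 1 / 2) using 3
  ring

lemma stdNormalCDF_sub (u v : ℝ) :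
    stdNormalCDF v - stdNormalCDF u = ∫ t in u..v, stdNormalPDF t := by
  unfold stdNormalCDF stdNormalPDF
  rw [intervalIntegral.integral_const_mul, ← mul_sub,
    intervalIntegral.integral_Iic_sub_Iic integrable_exp_neg_sq_div_two.integrableOn
      integrable_exp_neg_sq_div_two.integrableOn]

lemma stdNormalCDF_strictMono : StrictMono stdNormalCDF := fun u v huv => by
  rw [← sub_pos, stdNormalCDF_sub]
  refine intervalIntegral.intervalIntegral_pos_of_pos
    (integrable_exp_neg_sq_div_two.const_mul _).intervalIntegrable (fun t => ?_) huv
  unfold stdNormalPDF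
  positivity

lemma integral_gaussianDensity_eq_stdNormalCDF_sub (m c a b : ℝ) (hc : 0 < c) :
    ∫ x in a..b, 1 / (c * sqrt (2 * π)) * exp (-(x - m) ^ 2 / (2 * c ^ 2)) =
      stdNormalCDF ((b - m) / c) - stdNormalCDF ((a - m) / c) := by
  have hpdf : ∀ x, 1 / (c * sqrt (2 * π)) * exp (-(x - m) ^ 2 / (2 * c ^ 2)) =
      c⁻¹ * stdNormalPDF ((x - m) / c) := fun x => by
    have hexp : -(x - m) ^ 2 / (2 * c ^ 2) = -((x - m) / c) ^ 2 / 2 := by field_simp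
    rw [stdNormalPDF, hexp]
    ring
  simp only [hpdf, intervalIntegral.integral_const_mul,
    intervalIntegral.integral_comp_sub_right (fun y => stdNormalPDF (y / c)),
    intervalIntegral.integral_comp_div _ hc.ne', smul_eq_mul, stdNormalCDF_sub]
  field_simp

lemma div_rpow_mul_div_rpow_one_sub {A P Q : ℝ} (hA : 0 < A) (hP : 0 < P) (hQ : 0 < Q)
    (α f g : ℝ) :
    (A * exp f / Q) ^ α * (A * exp g / P) ^ (1 - α) =
      P ^ (α - 1) / Q ^ α * (A * exp (α * f + (1 - α) * g)) := by
  rw [div_rpow (by positivity) hQ.le, div_rpow (by positivity) hP.le,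
    mul_rpow hA.le (exp_pos _).le, mul_rpow hA.le (exp_pos _).le, ← exp_mul, ← exp_mul,
    exp_add, mul_comm f, mul_comm g]
  have hPinv : P ^ (α - 1) = (P ^ (1 - α))⁻¹ := by rw [← rpow_neg hP.le, neg_sub]
  have hAA : A ^ α * A ^ (1 - α) = A := by rw [← rpow_add hA]; norm_num
  rw [hPinv]
  conv_rhs => rw [← hAA]
  ring

lemma weighted_gaussian_exponent (α m c x : ℝ) :
    α * (-(x - m) ^ 2 / (2 * c ^ 2)) + (1 - α) * (-x ^ 2 / (2 * c ^ 2)) =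
      α * (α - 1) * (m ^ 2 / (2 * c ^ 2)) + -(x - α * m) ^ 2 / (2 * c ^ 2) := by
  ring

lemma gaussianDensity_div_rpow_mul_div_rpow_one_sub {c P Q : ℝ} (hc : 0 < c) (hP : 0 < P)
    (hQ : 0 < Q) (α m x : ℝ) :
    (1 / (c * sqrt (2 * π)) * exp (-(x - m) ^ 2 / (2 * c ^ 2)) / Q) ^ α *
        (1 / (c * sqrt (2 * π)) * exp (-x ^ 2 / (2 * c ^ 2)) / P) ^ (1 - α) =
      exp (α * (α - 1) * (m ^ 2 / (2 * c ^ 2))) *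
        (P ^ (α - 1) / Q ^ α *
          (1 / (c * sqrt (2 * π)) * exp (-(x - α * m) ^ 2 / (2 * c ^ 2)))) := by
  rw [div_rpow_mul_div_rpow_one_sub (by positivity) hP hQ, weighted_gaussian_exponent, exp_add]
  ring

/-- Closed-form order-α Rényi divergence between two truncated normals on `[a,b]`
(`N(μ,μ²σ²)` against `N(0,μ²σ²)`), from the appendix of the paper. -/
theorem renyi_truncated_normal_interval' (μ σ α a b : ℝ)
    (hμ : 0 < μ) (hσ : 0 < σ) (hα : 1 < α) (hab : a < b) :
    (1 / (α - 1)) * Real.log (∫ x in a..b,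
        ((1 / (μ * σ * Real.sqrt (2 * Real.pi))) *
            Real.exp (-(x - μ) ^ 2 / (2 * μ ^ 2 * σ ^ 2)) /
            (stdNormalCDF ((b - μ) / (μ * σ)) -
              stdNormalCDF ((a - μ) / (μ * σ)))) ^ α *
        ((1 / (μ * σ * Real.sqrt (2 * Real.pi))) *
            Real.exp (-x ^ 2 / (2 * μ ^ 2 * σ ^ 2)) /
            (stdNormalCDF (b / (μ * σ)) - stdNormalCDF (a / (μ * σ)))) ^ (1 - α)) =
      α / (2 * σ ^ 2) + (1 / (α - 1)) * Real.log (
        (stdNormalCDF (b / (μ * σ)) - stdNormalCDF (a / (μ * σ))) ^ (α - 1) /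
          (stdNormalCDF ((b - μ) / (μ * σ)) - stdNormalCDF ((a - μ) / (μ * σ))) ^ α *
          (stdNormalCDF ((b - α * μ) / (μ * σ)) -
            stdNormalCDF ((a - α * μ) / (μ * σ)))) := by
  have hc : 0 < μ * σ := by positivity
  have hmass {u v : ℝ} (h : u < v) :
      0 < stdNormalCDF (v / (μ * σ)) - stdNormalCDF (u / (μ * σ)) :=
    sub_pos.2 (stdNormalCDF_strictMono (div_lt_div_of_pos_right h hc))
  have hP := hmass hab
  have hQ := hmass (sub_lt_sub_right hab μ)
  have hR := hmass (sub_lt_sub_right hab (α * μ))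
  have hvar : 2 * μ ^ 2 * σ ^ 2 = 2 * (μ * σ) ^ 2 := by ring
  have hshift : μ ^ 2 / (2 * (μ * σ) ^ 2) = 1 / (2 * σ ^ 2) := by field_simp
  simp only [hvar, gaussianDensity_div_rpow_mul_div_rpow_one_sub hc hP hQ, hshift]
  rw [intervalIntegral.integral_const_mul, intervalIntegral.integral_const_mul,
    integral_gaussianDensity_eq_stdNormalCDF_sub _ _ _ _ hc,
    log_mul (exp_ne_zero _) (by positivity), log_exp]
  field_simp [sub_ne_zero.2 hα.ne']
end

section
/- Let μ > 0, σ > 0, α > 1, and b be real. Define the one-sided truncated normal densities p(x) = (1/(μσ√(2π))) · exp(-x²/(2μ²σ²)) / Φ(b/(μσ)) and q(x) = (1/(μσ√(2π))) · exp(-(x-μ)²/(2μ²σ²)) / Φ((b-μ)/(μσ)) for x ≤ b. Then (1/(α-1)) · ln(∫_{-∞}^b p(x)^α · q(x)^(1-α) dx) = α/(2σ²) + (1/(α-1)) · ln[ Φ((b-μ)/(μσ))^(α-1) / Φ(b/(μσ))^α · Φ((b+(α-1)μ)/(μσ)) ]. -/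
open MeasureTheory Real Filter

lemma stdNormalCDF_pos (x : ℝ) : 0 < stdNormalCDF x := by
  unfold stdNormalCDF
  have h2π : 0 < Real.sqrt (2 * Real.pi) := Real.sqrt_pos.mpr (by positivity)
  refine mul_pos (inv_pos.mpr h2π) ?_
  have hint : IntegrableOn (fun t : ℝ => Real.exp (-t ^ 2 / 2)) (Set.Iic x) := by
    have h := integrable_exp_neg_mul_sq (b := (1:ℝ)/2) (by norm_num)
    have h2 : (fun t : ℝ => Real.exp (-t ^ 2 / 2)) = fun t => Real.exp (-(1/2) * t ^ 2) := by
      funext t; ring_nf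
    rw [h2]; exact h.integrableOn
  rw [setIntegral_pos_iff_support_of_nonneg_ae ?_ hint]
  · have hsupp : Function.support (fun t : ℝ => Real.exp (-t ^ 2 / 2)) = Set.univ := by
      ext t; simp [Real.exp_ne_zero]
    rw [hsupp, Set.univ_inter, Real.volume_Iic]
    exact ENNReal.zero_lt_top
  · filter_upwards with t using (Real.exp_pos _).le

lemma map_affine_volume (s m : ℝ) (hs : s ≠ 0) :
    Measure.map (fun t : ℝ => s * t + m) volume = ENNReal.ofReal |s⁻¹| • volume := by
  have h : (fun t : ℝ => s * t + m) = (fun x => x + m) ∘ (fun t => s * t) := rfl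
  rw [h, ← Measure.map_map (measurable_add_const m) (measurable_const_mul s),
    Real.map_volume_mul_left hs, Measure.map_smul, map_add_right_eq_self]

lemma gauss_Iic (s m b : ℝ) (hs : 0 < s) :
    ∫ x in Set.Iic b, Real.exp (-(x - m) ^ 2 / (2 * s ^ 2)) =
      s * ∫ t in Set.Iic ((b - m) / s), Real.exp (-t ^ 2 / 2) := by
  have hne : s ≠ 0 := hs.ne'
  have hemb : MeasurableEmbedding (fun t : ℝ => s * t + m) :=
    ((Homeomorph.mulLeft₀ s hne).trans (Homeomorph.addRight m)).measurableEmbedding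
  have hvol : (volume : Measure ℝ) =
      ENNReal.ofReal s • Measure.map (fun t : ℝ => s * t + m) volume := by
    rw [map_affine_volume s m hne, smul_smul, abs_of_pos (inv_pos.mpr hs),
      ← ENNReal.ofReal_mul hs.le, mul_inv_cancel₀ hne, ENNReal.ofReal_one, one_smul]
  have hset : (fun t : ℝ => s * t + m) ⁻¹' Set.Iic b = Set.Iic ((b - m) / s) := by
    ext t
    simp only [Set.mem_preimage, Set.mem_Iic, le_div_iff₀ hs]
    constructor <;> intro h <;> nlinarith
  calc ∫ x in Set.Iic b, Real.exp (-(x - m) ^ 2 / (2 * s ^ 2))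
      = ∫ x in Set.Iic b, Real.exp (-(x - m) ^ 2 / (2 * s ^ 2))
          ∂(ENNReal.ofReal s • Measure.map (fun t : ℝ => s * t + m) volume) := by rw [← hvol]
    _ = s * ∫ x in Set.Iic b, Real.exp (-(x - m) ^ 2 / (2 * s ^ 2))
          ∂(Measure.map (fun t : ℝ => s * t + m) volume) := by
        rw [Measure.restrict_smul, integral_smul_measure, ENNReal.toReal_ofReal hs.le,
          smul_eq_mul]
    _ = s * ∫ t in (fun t : ℝ => s * t + m) ⁻¹' Set.Iic b,
          Real.exp (-(s * t + m - m) ^ 2 / (2 * s ^ 2)) := by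
        rw [hemb.setIntegral_map]
    _ = s * ∫ t in Set.Iic ((b - m) / s), Real.exp (-t ^ 2 / 2) := by
        rw [hset]
        congr 1
        refine setIntegral_congr_fun measurableSet_Iic fun t _ => ?_
        congr 1
        field_simp
        ring

lemma gauss_cdf (s m b : ℝ) (hs : 0 < s) :
    ∫ x in Set.Iic b, 1 / (s * Real.sqrt (2 * Real.pi)) * Real.exp (-(x - m) ^ 2 / (2 * s ^ 2)) =
      stdNormalCDF ((b - m) / s) := by
  rw [integral_const_mul, gauss_Iic s m b hs, stdNormalCDF]
  have h2π : Real.sqrt (2 * Real.pi) ≠ 0 := by positivity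
  field_simp

/-- Equation (12): exact order-α Rényi divergence of half-line truncated normals,
`D_α(f(·;0,μσ,-∞,b) ‖ f(·;μ,μσ,-∞,b))`. -/
theorem renyi_truncated_normal_halfline (μ σ α b : ℝ)
    (hμ : 0 < μ) (hσ : 0 < σ) (hα : 1 < α) :
    (1 / (α - 1)) * Real.log (∫ x in Set.Iic b,
        ((1 / (μ * σ * Real.sqrt (2 * Real.pi))) *
            Real.exp (-x ^ 2 / (2 * μ ^ 2 * σ ^ 2)) /
            stdNormalCDF (b / (μ * σ))) ^ α *
        ((1 / (μ * σ * Real.sqrt (2 * Real.pi))) *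
            Real.exp (-(x - μ) ^ 2 / (2 * μ ^ 2 * σ ^ 2)) /
            stdNormalCDF ((b - μ) / (μ * σ))) ^ (1 - α)) =
      α / (2 * σ ^ 2) + (1 / (α - 1)) * Real.log (
        stdNormalCDF ((b - μ) / (μ * σ)) ^ (α - 1) /
          stdNormalCDF (b / (μ * σ)) ^ α *
          stdNormalCDF ((b + (α - 1) * μ) / (μ * σ))) := by
  have hs : 0 < μ * σ := mul_pos hμ hσ
  have h2π : 0 < Real.sqrt (2 * Real.pi) := Real.sqrt_pos.mpr (by positivity)
  set C : ℝ := 1 / (μ * σ * Real.sqrt (2 * Real.pi)) with hCdef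
  have hC : 0 < C := by positivity
  set A : ℝ := stdNormalCDF (b / (μ * σ)) with hAdef
  set B : ℝ := stdNormalCDF ((b - μ) / (μ * σ)) with hBdef
  have hA : 0 < A := stdNormalCDF_pos _
  have hB : 0 < B := stdNormalCDF_pos _
  have hAα : (0:ℝ) < A ^ α := Real.rpow_pos_of_pos hA α
  have hBα : (0:ℝ) < B ^ (α - 1) := Real.rpow_pos_of_pos hB (α - 1)
  set K : ℝ := Real.exp (α * (α - 1) / (2 * σ ^ 2)) * B ^ (α - 1) / A ^ α with hKdef
  have hK : 0 < K := by positivity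
  have key : ∀ x : ℝ,
      (C * Real.exp (-x ^ 2 / (2 * μ ^ 2 * σ ^ 2)) / A) ^ α *
        (C * Real.exp (-(x - μ) ^ 2 / (2 * μ ^ 2 * σ ^ 2)) / B) ^ (1 - α)
      = K * (1 / (μ * σ * Real.sqrt (2 * Real.pi)) *
          Real.exp (-(x - (-(α - 1) * μ)) ^ 2 / (2 * (μ * σ) ^ 2))) := by
    intro x
    rw [Real.div_rpow (by positivity) hA.le, Real.div_rpow (by positivity) hB.le,
      Real.mul_rpow hC.le (Real.exp_pos _).le, Real.mul_rpow hC.le (Real.exp_pos _).le,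
      ← Real.exp_mul, ← Real.exp_mul]
    have hB1 : B ^ (1 - α) = (B ^ (α - 1))⁻¹ := by
      rw [show (1 - α) = -(α - 1) by ring, Real.rpow_neg hB.le]
    have hCsum : C ^ α * C ^ (1 - α) = C := by
      rw [← Real.rpow_add hC]; norm_num
    have hexp : -x ^ 2 / (2 * μ ^ 2 * σ ^ 2) * α +
        -(x - μ) ^ 2 / (2 * μ ^ 2 * σ ^ 2) * (1 - α)
        = α * (α - 1) / (2 * σ ^ 2) + -(x - (-(α - 1) * μ)) ^ 2 / (2 * (μ * σ) ^ 2) := by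
      field_simp
      ring
    have step : C ^ α * Real.exp (-x ^ 2 / (2 * μ ^ 2 * σ ^ 2) * α) / A ^ α *
        (C ^ (1 - α) * Real.exp (-(x - μ) ^ 2 / (2 * μ ^ 2 * σ ^ 2) * (1 - α)) / B ^ (1 - α))
        = (C ^ α * C ^ (1 - α)) *
            (Real.exp (-x ^ 2 / (2 * μ ^ 2 * σ ^ 2) * α) *
              Real.exp (-(x - μ) ^ 2 / (2 * μ ^ 2 * σ ^ 2) * (1 - α))) *
            (B ^ (α - 1) / A ^ α) := by
      rw [hB1]
      field_simp
    rw [step, hCsum, ← Real.exp_add, hexp, Real.exp_add, hKdef, hCdef]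
    ring
  have hint : ∫ x in Set.Iic b,
      (C * Real.exp (-x ^ 2 / (2 * μ ^ 2 * σ ^ 2)) / A) ^ α *
        (C * Real.exp (-(x - μ) ^ 2 / (2 * μ ^ 2 * σ ^ 2)) / B) ^ (1 - α)
      = K * stdNormalCDF ((b + (α - 1) * μ) / (μ * σ)) := by
    simp_rw [key]
    rw [integral_const_mul, gauss_cdf (μ * σ) (-(α - 1) * μ) b hs]
    congr 2
    ring
  rw [hint]
  rw [Real.log_mul hK.ne' (stdNormalCDF_pos _).ne']
  rw [hKdef, Real.log_div (by positivity) hAα.ne', Real.log_mul (Real.exp_pos _).ne' hBα.ne',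
    Real.log_exp, Real.log_rpow hB, Real.log_rpow hA]
  rw [Real.log_mul (by positivity) (stdNormalCDF_pos _).ne',
    Real.log_div hBα.ne' hAα.ne', Real.log_rpow hB, Real.log_rpow hA]
  have hα1 : α - 1 ≠ 0 := by linarith
  field_simp
  ring
end
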